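/- Let μ_φ be the Gibbs measure of a Lipschitz potential φ with pressure 0 and let D = D(φ) > 0 be a constant such that the exponential inequality ∫ exp(K(x,…,σ^{n−1}x)) dμ_φ(x) ≤ exp(∫ K dμ_φ-average) · exp(D Σ_{i=0}^{n−1} Lip_i(K)²) holds for all n and all separately Lipschitz K:Ω^n→ℝ. Then for every α ∈ (0,1), every n ≥ 2 and every integer k = k(n) ≥ 1 with k(n) ≤ (α/(2 log|A|)) log n, the variance under μ_φ of x ↦ Ĥ_{k(n)}(x_0^{n−1})/k(n) is at most 8D (log n)² / n^{1−α}. -/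

import Mathlib

/-!
Changing one of the symbols `x_0, …, x_{n-1}` changes at most `k` of the `n` cyclic `k`-windows
of `x̃`, hence the word counts `c_a` by a total of at most `2k`; since `c ↦ c log c` has slope at
most `log n + 1` on `{0, …, n}`, `Ĥ_k / k = (log n - n⁻¹ ∑ c_a log c_a) / k` moves by at most
`B = 2 (log n + 1) / n`. Viewed as a function of `(x, σx, …, σ^{n-1}x)` that reads only the first
symbol of each coordinate, `t (Ĥ_k / k - mean)` has `Lip_j ≤ |t| B` (two points with different
first symbols are at `d_θ`-distance `1`), so the exponential inequality bounds its moment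
generating function by `exp (D n B² t²)`. As `e^s + e^{-s} ≥ 2 + s²`, one well-chosen `t` turns
this into a variance bound `(20/9) D n B²`, and the condition on `k` gives `n^α ≥ 4`, which
absorbs the constants.
-/

open MeasureTheory Finset
open scoped ENNReal

namespace GibbsEntropy

variable {A : Type*} [Fintype A] [DecidableEq A]

/-- The left shift `σ` on one-sided sequences `Ω = A^ℕ`. -/
def shift (x : ℕ → A) : ℕ → A := fun i => x (i + 1)

/-- The cylinder set `[w]` determined by a word `w = a_0 … a_{k-1}`. -/
def cylinder {k : ℕ} (w : Fin k → A) : Set (ℕ → A) := {x | ∀ i : Fin k, x i.val = w i}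

/-- The metric `d_θ(x,y) = θ^N`, `N` the first disagreement index. -/
noncomputable def dTheta (θ : ℝ) (x y : ℕ → A) : ℝ :=
  letI : Decidable (x = y) := Classical.dec _
  if h : x = y then 0
  else θ ^ (Nat.find (p := fun n => x n ≠ y n)
    (by by_contra hc; push_neg at hc; exact h (funext fun i => hc i)))

/-- `f` is Lipschitz w.r.t. `d_θ`, i.e. `var_m(f) ≤ C θ^m` for all `m`
(`var_m` being the oscillation over pairs agreeing on coordinates `0,…,m`). -/
def LipFun (θ : ℝ) (f : (ℕ → A) → ℝ) : Prop :=
  ∃ C : ℝ, 0 ≤ C ∧ ∀ (m : ℕ) (x y : ℕ → A), (∀ i ≤ m, x i = y i) → |f x - f y| ≤ C * θ ^ m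

/-- `|f|_θ`, the least Lipschitz constant of `f` w.r.t. `d_θ`. -/
noncomputable def lipNorm (θ : ℝ) (f : (ℕ → A) → ℝ) : ℝ :=
  sInf {C : ℝ | 0 ≤ C ∧ ∀ (m : ℕ) (x y : ℕ → A), (∀ i ≤ m, x i = y i) → |f x - f y| ≤ C * θ ^ m}

/-- A separately Lipschitz function of `n` variables in `Ω^n`. -/
def SepLip (θ : ℝ) {n : ℕ} (K : (Fin n → (ℕ → A)) → ℝ) : Prop :=
  ∀ j : Fin n, ∃ C : ℝ, 0 ≤ C ∧ ∀ (x : Fin n → (ℕ → A)) (y : ℕ → A),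
    |K x - K (Function.update x j y)| ≤ C * dTheta θ (x j) y

/-- `Lip_j(K)`, the least Lipschitz constant of `K` in its `j`-th variable. -/
noncomputable def lipCoord (θ : ℝ) {n : ℕ} (K : (Fin n → (ℕ → A)) → ℝ) (j : Fin n) : ℝ :=
  sInf {C : ℝ | 0 ≤ C ∧ ∀ (x : Fin n → (ℕ → A)) (y : ℕ → A),
    |K x - K (Function.update x j y)| ≤ C * dTheta θ (x j) y}

/-- The trajectory `(x, σx, …, σ^{n-1}x)`. -/
def traj (n : ℕ) (x : ℕ → A) : Fin n → (ℕ → A) := fun i => shift^[i.val] x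

/-- The Gibbs property (with topological pressure `0`) of `μ` for the potential `φ`:
`C⁻¹ ≤ μ([x_0^{m-1}]) / exp(∑_{k<m} φ(σ^k x)) ≤ C`. -/
def IsGibbs [MeasurableSpace A] (φ : (ℕ → A) → ℝ) (μ : Measure (ℕ → A)) : Prop :=
  ∃ C : ℝ, 1 < C ∧ ∀ (x : ℕ → A) (m : ℕ), 1 ≤ m →
    C⁻¹ * Real.exp (∑ i ∈ Finset.range m, φ (shift^[i] x)) ≤
        (μ (cylinder (fun i : Fin m => x i.val))).toReal ∧
    (μ (cylinder (fun i : Fin m => x i.val))).toReal ≤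
        C * Real.exp (∑ i ∈ Finset.range m, φ (shift^[i] x))

/-- Empirical frequency `E_k(w; x_0^{n-1})` of the word `w` in the `n`-periodization of `x`. -/
noncomputable def empFreq (n k : ℕ) (x : ℕ → A) (w : Fin k → A) : ℝ :=
  ((Finset.range n).filter (fun j => ∀ i : Fin k, x ((j + i.val) % n) = w i)).card / n

/-- `k`-block entropy `H_k(η)` of a probability vector `η` on `A^k` (`0 log 0 = 0`). -/
noncomputable def blockEnt (k : ℕ) (η : (Fin k → A) → ℝ) : ℝ :=
  -∑ w : Fin k → A, η w * Real.log (η w)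

/-- The `k`-block empirical entropy `Ĥ_k(x_0^{n-1})`. -/
noncomputable def empEnt (n k : ℕ) (x : ℕ → A) : ℝ := blockEnt k (empFreq n k x)

/-- The `k`-block conditional empirical entropy `ĥ_k = Ĥ_k - Ĥ_{k-1}`. -/
noncomputable def condEmpEnt (n k : ℕ) (x : ℕ → A) : ℝ := empEnt n k x - empEnt n (k - 1) x

/-- `k`-block relative entropy `H_k(η | ρ) = ∑ η log(η/ρ)` (conventions `0 log 0 = 0`,
`0 log (0/c) = 0`). -/
noncomputable def relEnt (k : ℕ) (η ρ : (Fin k → A) → ℝ) : ℝ :=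
  ∑ w : Fin k → A, η w * Real.log (η w / ρ w)

/-- `μ([w])` as a real number. -/
noncomputable def muWord [MeasurableSpace A] (μ : Measure (ℕ → A)) (k : ℕ) (w : Fin k → A) : ℝ :=
  (μ (cylinder w)).toReal

/-- `Δ̂_k(x_0^{n-1}) = -H_k(E_k(·;x_0^{n-1})|μ) + H_{k-1}(E_{k-1}(·;x_0^{n-1})|μ)`. -/
noncomputable def deltaHat [MeasurableSpace A] (μ : Measure (ℕ → A)) (n k : ℕ) (x : ℕ → A) : ℝ :=
  -relEnt k (empFreq n k x) (muWord μ k) +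
    relEnt (k - 1) (empFreq n (k - 1) x) (muWord μ (k - 1))

/-- Hitting time `W_n(x,y) = inf{j ≥ 1 : y_j^{j+n-1} = x_0^{n-1}}` (in `ℝ≥0∞`, `= ∞`
if there is no such `j`). -/
noncomputable def hitTime (n : ℕ) (x y : ℕ → A) : ℝ≥0∞ :=
  ⨅ (j : ℕ) (_ : 1 ≤ j ∧ ∀ i : Fin n, y (j + i.val) = x i.val), (j : ℝ≥0∞)

/-- Hitting time `τ_{[w]}(y) = inf{j ≥ 1 : y_j^{j+n-1} = w}` of the cylinder of a word `w`. -/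
noncomputable def wordHitTime {n : ℕ} (w : Fin n → A) (y : ℕ → A) : ℝ≥0∞ :=
  ⨅ (j : ℕ) (_ : 1 ≤ j ∧ ∀ i : Fin n, y (j + i.val) = w i), (j : ℝ≥0∞)

/-- The tail word `a_1^{k-1}` of a word `a_0^{k-1}`. -/
def wordTail {k : ℕ} (w : Fin k → A) : Fin (k - 1) → A := fun i => w ⟨i.val + 1, by omega⟩

end GibbsEntropy

open Real

theorem sum_abs_card_filter_eq_sub_le {ι β : Type*} [Fintype β] [DecidableEq β]
    (s : Finset ι) (u v : ι → β) :
    ∑ b, |(#{i ∈ s | u i = b} : ℝ) - #{i ∈ s | v i = b}| ≤ 2 * #{i ∈ s | u i ≠ v i} := by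
  have hpoint : ∀ i, ∑ b, |(if u i = b then 1 else 0 : ℝ) - if v i = b then 1 else 0|
      ≤ if u i ≠ v i then 2 else 0 := by
    intro i
    by_cases h : u i = v i
    · simp [h]
    · calc ∑ b, |(if u i = b then 1 else 0 : ℝ) - if v i = b then 1 else 0|
          ≤ ∑ b, ((if u i = b then 1 else 0 : ℝ) + if v i = b then 1 else 0) :=
            sum_le_sum fun b _ => (abs_sub _ _).trans (by split_ifs <;> norm_num)
        _ = if u i ≠ v i then 2 else 0 := by simp [sum_add_distrib, h]; norm_num
  calc ∑ b, |(#{i ∈ s | u i = b} : ℝ) - #{i ∈ s | v i = b}|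
      = ∑ b, |∑ i ∈ s, ((if u i = b then 1 else 0 : ℝ) - if v i = b then 1 else 0)| := by
        simp only [natCast_card_filter, sum_sub_distrib]
    _ ≤ ∑ b, ∑ i ∈ s, |(if u i = b then 1 else 0 : ℝ) - if v i = b then 1 else 0| :=
        sum_le_sum fun b _ => abs_sum_le_sum_abs _ _
    _ ≤ ∑ i ∈ s, if u i ≠ v i then (2 : ℝ) else 0 := by
        rw [sum_comm]; exact sum_le_sum fun i _ => hpoint i
    _ = 2 * #{i ∈ s | u i ≠ v i} := by
        rw [natCast_card_filter, mul_sum]; simp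

theorem card_filter_add_mod_eq_le_one {n j₀ : ℕ} (i : ℕ) :
    #{j ∈ range n | (j + i) % n = j₀} ≤ 1 :=
  card_le_one.2 fun j hj j' hj' => by
    simp only [mem_filter, mem_range] at hj hj'
    exact Nat.ModEq.eq_of_lt_of_lt
      (Nat.ModEq.add_right_cancel' i (hj.2.trans hj'.2.symm)) hj.1 hj'.1

theorem natCast_mul_log_le_natCast_mul_log {c c' : ℕ} (h : c' ≤ c) :
    (c' : ℝ) * log c' ≤ c * log c := by
  rcases c'.eq_zero_or_pos with rfl | hc'
  · simpa using mul_nonneg c.cast_nonneg (log_natCast_nonneg c)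
  · have hc'R : (0 : ℝ) < c' := by exact_mod_cast hc'
    have hcc : (c' : ℝ) ≤ c := by exact_mod_cast h
    gcongr

theorem natCast_mul_log_sub_le {n c c' : ℕ} (hc : c ≤ n) (h : c' ≤ c) :
    (c : ℝ) * log c - c' * log c' ≤ (c - c') * (log n + 1) := by
  have hlog : log c ≤ log n := by
    rcases c.eq_zero_or_pos with rfl | hc0
    · simpa using log_natCast_nonneg n
    · exact log_le_log (by exact_mod_cast hc0) (by exact_mod_cast hc)
  have hratio : (c' : ℝ) * (log c - log c') ≤ c - c' := by
    rcases c'.eq_zero_or_pos with rfl | hc'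
    · simp
    · have hc'R : (0 : ℝ) < c' := by exact_mod_cast hc'
      have hcR : (0 : ℝ) < c := by exact_mod_cast hc'.trans_le h
      rw [← log_div hcR.ne' hc'R.ne']
      calc (c' : ℝ) * log (c / c') ≤ c' * (c / c' - 1) :=
            mul_le_mul_of_nonneg_left (log_le_sub_one_of_pos (by positivity)) hc'R.le
        _ = c - c' := by field_simp
  have hcc : (c' : ℝ) ≤ c := by exact_mod_cast h
  nlinarith [mul_le_mul_of_nonneg_left hlog (sub_nonneg.2 hcc)]

theorem abs_natCast_mul_log_sub_le {n c c' : ℕ} (hc : c ≤ n) (hc' : c' ≤ n) :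
    |(c : ℝ) * log c - c' * log c'| ≤ |(c : ℝ) - c'| * (log n + 1) := by
  wlog h : c' ≤ c generalizing c c'
  · rw [abs_sub_comm, abs_sub_comm (c : ℝ)]
    exact this hc' hc (by omega)
  have hcc : (c' : ℝ) ≤ c := by exact_mod_cast h
  rw [abs_of_nonneg (sub_nonneg.2 (natCast_mul_log_le_natCast_mul_log h)),
    abs_of_nonneg (sub_nonneg.2 hcc)]
  exact natCast_mul_log_sub_le hc h

theorem two_add_sq_le_exp_add_exp_neg (t : ℝ) : 2 + t ^ 2 ≤ exp t + exp (-t) := by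
  have hsinh : (t / 2) ^ 2 ≤ sinh (t / 2) ^ 2 :=
    sq_le_sq.2 (by rw [abs_sinh]; exact self_le_sinh_iff.2 (abs_nonneg _))
  have hcosh : cosh t = 1 + 2 * sinh (t / 2) ^ 2 := by
    conv_lhs => rw [show t = 2 * (t / 2) by ring, cosh_two_mul, cosh_sq]
    ring
  rw [cosh_eq] at hcosh
  linarith

theorem integral_sq_le_of_integral_exp_le {Ω : Type*} [MeasurableSpace Ω] {μ : Measure Ω}
    [IsProbabilityMeasure μ] {g : Ω → ℝ} {S : ℝ} (hS : 0 < S)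
    (hint : ∀ t, Integrable (fun x => exp (t * g x)) μ) (hint2 : Integrable (fun x => g x ^ 2) μ)
    (hexp : ∀ t, ∫ x, exp (t * g x) ∂μ ≤ exp (S * t ^ 2)) :
    ∫ x, g x ^ 2 ∂μ ≤ 20 / 9 * S := by
  -- one `t` suffices; `S t² = 1/10` makes `2 (e^{S t²} - 1) ≤ 2/9`
  set t := √(1 / (10 * S))
  have ht2 : t ^ 2 = 1 / (10 * S) := sq_sqrt (by positivity)
  have hSt : S * t ^ 2 = 1 / 10 := by rw [ht2]; field_simp
  have hexp10 : exp (1 / 10 : ℝ) ≤ 10 / 9 :=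
    (exp_bound_div_one_sub_of_interval (by norm_num) (by norm_num)).trans_eq (by norm_num)
  have hpoint : ∀ x, t ^ 2 * g x ^ 2 ≤ exp (t * g x) + exp (-t * g x) - 2 := fun x => by
    have := two_add_sq_le_exp_add_exp_neg (t * g x)
    rw [neg_mul]
    linarith
  have hsum := (hint t).add (hint (-t))
  have hmono : t ^ 2 * ∫ x, g x ^ 2 ∂μ ≤ ∫ x, exp (t * g x) ∂μ + ∫ x, exp (-t * g x) ∂μ - 2 :=
    calc t ^ 2 * ∫ x, g x ^ 2 ∂μ = ∫ x, t ^ 2 * g x ^ 2 ∂μ := (integral_const_mul _ _).symm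
      _ ≤ ∫ x, (exp (t * g x) + exp (-t * g x) - 2) ∂μ :=
          integral_mono (hint2.const_mul _) (hsum.sub (integrable_const 2)) hpoint
      _ = _ := by
          rw [integral_sub (f := fun x => exp (t * g x) + exp (-t * g x)) hsum (integrable_const 2),
            integral_add (hint t) (hint (-t))]
          simp
  have hplus := hexp t
  have hminus := hexp (-t)
  rw [neg_sq, hSt] at hminus
  rw [hSt] at hplus
  have hpos : 0 < t ^ 2 := by rw [ht2]; positivity
  rw [← le_div_iff₀' hpos] at hmono
  calc _ ≤ _ := hmono
    _ ≤ (2 / 9) / t ^ 2 := by gcongr; linarith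
    _ = 20 / 9 * S := by rw [ht2]; field_simp; ring

theorem two_log_two_le_mul_log {a n k : ℕ} {α : ℝ} (ha : 2 ≤ a) (hk : 1 ≤ k)
    (hkn : (k : ℝ) ≤ α / (2 * log a) * log n) : 2 * log 2 ≤ α * log n := by
  have hlog : log 2 ≤ log a := log_le_log (by norm_num) (by exact_mod_cast ha)
  have hpos : 0 < 2 * log a := by linarith [log_pos (by norm_num : (1 : ℝ) < 2)]
  have h1 : (1 : ℝ) ≤ α / (2 * log a) * log n := le_trans (by exact_mod_cast hk) hkn
  rw [div_mul_eq_mul_div, le_div_iff₀ hpos, one_mul] at h1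
  linarith

theorem sq_log_add_one_div_le_sq_log_div_rpow {D α : ℝ} {n : ℕ} (hD : 0 ≤ D) (hn : 0 < n)
    (hα : α ≤ 1) (h : 2 * log 2 ≤ α * log n) :
    80 / 9 * D * (log n + 1) ^ 2 / n ≤ 8 * D * log n ^ 2 / (n : ℝ) ^ (1 - α) := by
  have hnR : (0 : ℝ) < n := by exact_mod_cast hn
  have hL : 2 * log 2 ≤ log n := by nlinarith [log_natCast_nonneg n]
  have hnα : 4 ≤ (n : ℝ) ^ α := by
    rw [le_rpow_iff_log_le (by norm_num) hnR, show (4 : ℝ) = 2 ^ 2 by norm_num, log_pow]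
    push_cast
    linarith
  -- `log n ≥ 2 log 2 > 1.3862` is what makes `80/9 (log n + 1)² ≤ 32 (log n)²` hold
  have hkey : 80 / 9 * (log n + 1) ^ 2 ≤ 8 * log n ^ 2 * (n : ℝ) ^ α := by
    have := log_two_gt_d9
    nlinarith [mul_le_mul_of_nonneg_left hnα (by positivity : (0 : ℝ) ≤ 8 * log n ^ 2)]
  rw [rpow_sub hnR, rpow_one, div_div_eq_mul_div, div_le_div_iff_of_pos_right hnR]
  nlinarith [mul_le_mul_of_nonneg_left hkey hD]

namespace GibbsEntropy

variable {A : Type*}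

section

variable [DecidableEq A]

def blockAt (n k : ℕ) (x : ℕ → A) (j : ℕ) : Fin k → A := fun i => x ((j + i) % n)

def wordCount (n k : ℕ) (x : ℕ → A) (w : Fin k → A) : ℕ := #{j ∈ range n | blockAt n k x j = w}

theorem wordCount_le (n k : ℕ) (x : ℕ → A) (w : Fin k → A) : wordCount n k x w ≤ n :=
  (card_filter_le _ _).trans (card_range n).le

theorem card_filter_blockAt_ne_le {n k j₀ : ℕ} {x y : ℕ → A}
    (hxy : ∀ m < n, m ≠ j₀ → x m = y m) :
    #{j ∈ range n | blockAt n k x j ≠ blockAt n k y j} ≤ k := by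
  have hsub : {j ∈ range n | blockAt n k x j ≠ blockAt n k y j}
      ⊆ (range k).biUnion fun i => {j ∈ range n | (j + i) % n = j₀} := by
    intro j hj
    simp only [mem_filter, mem_range, ne_eq, blockAt, funext_iff, not_forall] at hj
    obtain ⟨hj, i, hi⟩ := hj
    simp only [mem_biUnion, mem_filter, mem_range]
    exact ⟨i, i.isLt, hj, by_contra fun h => hi (hxy _ (Nat.mod_lt _ (by omega)) h)⟩
  calc _ ≤ _ := card_le_card hsub
    _ ≤ ∑ i ∈ range k, #{j ∈ range n | (j + i) % n = j₀} := card_biUnion_le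
    _ ≤ ∑ _i ∈ range k, 1 := sum_le_sum fun i _ => card_filter_add_mod_eq_le_one i
    _ = k := by simp

theorem empFreq_eq_wordCount_div (n k : ℕ) (x : ℕ → A) (w : Fin k → A) :
    empFreq n k x w = wordCount n k x w / n := by
  simp only [empFreq, wordCount, blockAt, funext_iff]

variable [Fintype A]

theorem sum_wordCount (n k : ℕ) (x : ℕ → A) : ∑ w, wordCount n k x w = n := by
  simp only [wordCount]
  rw [← card_eq_sum_card_fiberwise fun _ _ => mem_univ _, card_range]

theorem sum_abs_wordCount_sub_le {n k j₀ : ℕ} {x y : ℕ → A}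
    (hxy : ∀ m < n, m ≠ j₀ → x m = y m) :
    ∑ w, |(wordCount n k x w : ℝ) - wordCount n k y w| ≤ 2 * k :=
  (sum_abs_card_filter_eq_sub_le _ _ _).trans <| by
    gcongr
    exact_mod_cast card_filter_blockAt_ne_le hxy

theorem empEnt_eq_log_sub {n : ℕ} (hn : 0 < n) (k : ℕ) (x : ℕ → A) :
    empEnt n k x = log n - (∑ w, (wordCount n k x w : ℝ) * log (wordCount n k x w)) / n := by
  have hnR : (0 : ℝ) < n := by exact_mod_cast hn
  have hterm : ∀ w, empFreq n k x w * log (empFreq n k x w)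
      = (wordCount n k x w : ℝ) * log (wordCount n k x w) / n - wordCount n k x w / n * log n := by
    intro w
    rw [empFreq_eq_wordCount_div]
    rcases (wordCount n k x w).eq_zero_or_pos with h | h
    · simp [h]
    · rw [log_div (by positivity) hnR.ne']
      ring
  have hsum : ∑ w, (wordCount n k x w : ℝ) = n := by exact_mod_cast sum_wordCount n k x
  simp only [empEnt, blockEnt, hterm, sum_sub_distrib, ← sum_div, ← sum_mul, hsum]
  field_simp
  ring

theorem abs_empEnt_sub_le {n : ℕ} (hn : 0 < n) (k : ℕ) {j₀ : ℕ} {x y : ℕ → A}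
    (hxy : ∀ m < n, m ≠ j₀ → x m = y m) :
    |empEnt n k x - empEnt n k y| ≤ 2 * k * (log n + 1) / n := by
  have hnR : (0 : ℝ) < n := by exact_mod_cast hn
  have hlog : 0 ≤ log n + 1 := by linarith [log_natCast_nonneg n]
  rw [empEnt_eq_log_sub hn, empEnt_eq_log_sub hn, sub_sub_sub_cancel_left, ← sub_div,
    ← sum_sub_distrib, abs_div, abs_of_pos hnR]
  gcongr
  calc _ ≤ ∑ w, |(wordCount n k y w : ℝ) * log (wordCount n k y w)
          - wordCount n k x w * log (wordCount n k x w)| := abs_sum_le_sum_abs _ _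
    _ ≤ ∑ w, |(wordCount n k y w : ℝ) - wordCount n k x w| * (log n + 1) :=
        sum_le_sum fun w _ => abs_natCast_mul_log_sub_le (wordCount_le ..) (wordCount_le ..)
    _ ≤ 2 * k * (log n + 1) := by
        rw [← sum_mul]
        gcongr
        exact sum_abs_wordCount_sub_le fun m hm hne => (hxy m hm hne).symm

def periodize {n : ℕ} (hn : 0 < n) (w : Fin n → A) : ℕ → A := fun m => w ⟨m % n, Nat.mod_lt m hn⟩

theorem empEnt_periodize {n : ℕ} (hn : 0 < n) (k : ℕ) (x : ℕ → A) :
    empEnt n k (periodize hn fun i => x i) = empEnt n k x := by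
  have h : empFreq n k (periodize hn fun i => x i) = empFreq n k x := by
    funext w
    simp only [empFreq, periodize, Nat.mod_mod]
  rw [empEnt, h, empEnt]

theorem abs_empEnt_periodize_sub_le {n : ℕ} (hn : 0 < n) (k : ℕ) {w w' : Fin n → A} {j : Fin n}
    (hw : ∀ i ≠ j, w i = w' i) :
    |empEnt n k (periodize hn w) - empEnt n k (periodize hn w')| ≤ 2 * k * (log n + 1) / n :=
  abs_empEnt_sub_le hn k (j₀ := j) fun m hm hne => by
    simp only [periodize, Nat.mod_eq_of_lt hm]
    exact hw _ fun h => hne (congrArg Fin.val h)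

end

theorem shift_iterate_apply (m : ℕ) (x : ℕ → A) (i : ℕ) : shift^[m] x i = x (i + m) := by
  induction m generalizing x with
  | zero => rfl
  | succ m ih => rw [Function.iterate_succ_apply, ih, shift, add_assoc]

theorem traj_apply_zero (n : ℕ) (x : ℕ → A) (i : Fin n) : traj n x i 0 = x i := by
  rw [traj, shift_iterate_apply, zero_add]

theorem integrable_comp_restrict [Finite A] [MeasurableSpace A] [MeasurableSingletonClass A]
    (μ : Measure (ℕ → A)) [IsFiniteMeasure μ] {n : ℕ} (F : (Fin n → A) → ℝ) :
    Integrable (fun x : ℕ → A => F fun i => x i) μ :=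
  Integrable.of_finite.comp_measurable (measurable_pi_lambda _ fun _ => measurable_pi_apply _)

section

variable [DecidableEq A]

theorem dTheta_nonneg {θ : ℝ} (hθ : 0 ≤ θ) (x y : ℕ → A) : 0 ≤ dTheta θ x y := by
  unfold dTheta
  split_ifs <;> positivity

theorem dTheta_eq_one_of_ne {θ : ℝ} {x y : ℕ → A} (h : x 0 ≠ y 0) : dTheta θ x y = 1 := by
  rw [dTheta, dif_neg fun hxy => h (congrFun hxy 0), Nat.find_eq_zero _ |>.2 h, pow_zero]

theorem sq_lipCoord_le {θ C : ℝ} {n : ℕ} {K : (Fin n → (ℕ → A)) → ℝ} {j : Fin n} (hC : 0 ≤ C)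
    (hK : ∀ x y, |K x - K (Function.update x j y)| ≤ C * dTheta θ (x j) y) :
    lipCoord θ K j ^ 2 ≤ C ^ 2 := by
  have hmem : C ∈ {C : ℝ | 0 ≤ C ∧ ∀ (x : Fin n → (ℕ → A)) (y : ℕ → A),
      |K x - K (Function.update x j y)| ≤ C * dTheta θ (x j) y} := ⟨hC, hK⟩
  exact pow_le_pow_left₀ (le_csInf ⟨C, hmem⟩ fun _ h => h.1) (csInf_le ⟨0, fun _ h => h.1⟩ hmem) 2

variable [Fintype A] [MeasurableSpace A]

def HasGaussianConcentration (θ D : ℝ) (μ : Measure (ℕ → A)) (n : ℕ) : Prop :=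
  ∀ K : (Fin n → (ℕ → A)) → ℝ, SepLip θ K →
    ∫ x, exp (K (traj n x)) ∂μ ≤ exp (∫ y, K (traj n y) ∂μ) * exp (D * ∑ j, lipCoord θ K j ^ 2)

variable [MeasurableSingletonClass A]

theorem integral_exp_le_of_abs_sub_le {θ D B : ℝ} (hθ : 0 ≤ θ) (hD : 0 ≤ D) (hB : 0 ≤ B)
    {μ : Measure (ℕ → A)} [IsProbabilityMeasure μ] {n : ℕ} (hIneq : HasGaussianConcentration θ D μ n)
    {F : (Fin n → A) → ℝ} (hF : ∀ w w' j, (∀ i ≠ j, w i = w' i) → |F w - F w'| ≤ B) (t : ℝ) :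
    ∫ x, exp (t * (F (fun i => x i) - ∫ y, F (fun i => y i) ∂μ)) ∂μ ≤
      exp (D * n * B ^ 2 * t ^ 2) := by
  set m := ∫ y, F (fun i => y i) ∂μ
  set K : (Fin n → (ℕ → A)) → ℝ := fun y => t * (F (fun i => y i 0) - m)
  have hKtraj : ∀ x, K (traj n x) = t * (F (fun i => x i) - m) := fun x => by
    simp only [K, traj_apply_zero]
  -- only the first symbol of each coordinate matters, and a change there has `d_θ = 1`
  have hKlip : ∀ j x y, |K x - K (Function.update x j y)| ≤ |t| * B * dTheta θ (x j) y := by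
    intro j x y
    by_cases h0 : x j 0 = y 0
    · have : (fun i => Function.update x j y i 0) = fun i => x i 0 := by
        funext i
        rcases eq_or_ne i j with rfl | hij
        · simp [h0]
        · simp [hij]
      simp only [K, this, sub_self, abs_zero]
      exact mul_nonneg (by positivity) (dTheta_nonneg hθ _ _)
    · rw [dTheta_eq_one_of_ne h0, mul_one, ← mul_sub, sub_sub_sub_cancel_right, abs_mul]
      gcongr
      exact hF _ _ j fun i hij => by simp [hij]
  have hKmean : ∫ y, K (traj n y) ∂μ = 0 := by
    simp only [hKtraj]
    rw [integral_const_mul, integral_sub (integrable_comp_restrict μ F) (integrable_const m)]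
    simp [m]
  calc ∫ x, exp (t * (F (fun i => x i) - m)) ∂μ = ∫ x, exp (K (traj n x)) ∂μ := by
        simp only [hKtraj]
    _ ≤ exp (D * ∑ j : Fin n, lipCoord θ K j ^ 2) := by
        simpa [hKmean] using hIneq K fun j => ⟨|t| * B, by positivity, hKlip j⟩
    _ ≤ exp (D * ∑ _j : Fin n, (|t| * B) ^ 2) := by
        gcongr exp (D * ?_)
        exact sum_le_sum fun j _ => sq_lipCoord_le (by positivity) (hKlip j)
    _ = exp (D * n * B ^ 2 * t ^ 2) := by
        rw [sum_const, card_univ, Fintype.card_fin, nsmul_eq_mul, mul_pow, sq_abs]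
        ring_nf

theorem integral_sq_empEnt_div_sub_le {θ D : ℝ} (hθ : 0 ≤ θ) (hD : 0 < D)
    {μ : Measure (ℕ → A)} [IsProbabilityMeasure μ] {n k : ℕ} (hn : 0 < n) (hk : 0 < k)
    (hIneq : HasGaussianConcentration θ D μ n) :
    ∫ x, (empEnt n k x / k - ∫ y, empEnt n k y / k ∂μ) ^ 2 ∂μ ≤
      80 / 9 * D * (log n + 1) ^ 2 / n := by
  have hnR : (0 : ℝ) < n := by exact_mod_cast hn
  have hkR : (0 : ℝ) < k := by exact_mod_cast hk
  have hL : 0 < log n + 1 := by linarith [log_natCast_nonneg n]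
  set F : (Fin n → A) → ℝ := fun w => empEnt n k (periodize hn w) / k
  have hF : ∀ x : ℕ → A, F (fun i => x i) = empEnt n k x / k := fun x => by
    simp only [F, empEnt_periodize]
  set B := 2 * (log n + 1) / n
  have hFB : ∀ w w' j, (∀ i ≠ j, w i = w' i) → |F w - F w'| ≤ B := fun w w' j hw => by
    rw [← sub_div, abs_div, abs_of_pos hkR, div_le_iff₀ hkR]
    exact (abs_empEnt_periodize_sub_le hn k hw).trans_eq (by ring)
  set m := ∫ y, F (fun i => y i) ∂μ
  have hvar := integral_sq_le_of_integral_exp_le (μ := μ) (g := fun x => F (fun i => x i) - m)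
    (S := D * n * B ^ 2) (by positivity)
    (fun t => integrable_comp_restrict μ fun w => exp (t * (F w - m)))
    (integrable_comp_restrict μ fun w => (F w - m) ^ 2)
    (integral_exp_le_of_abs_sub_le hθ hD.le (by positivity) hIneq hFB)
  simp only [hF, m] at hvar
  exact hvar.trans_eq (by simp only [B]; field_simp; ring)

end

end GibbsEntropy

open GibbsEntropy

theorem statement_7_general {A : Type*} [Fintype A] [DecidableEq A] [MeasurableSpace A] [MeasurableSingletonClass A]
    (hA : 2 ≤ Fintype.card A)
    (θ : ℝ) (hθ : θ ∈ Set.Ioo (0 : ℝ) 1)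
    (μ : Measure (ℕ → A)) [IsProbabilityMeasure μ]
    (D : ℝ) (hD : 0 < D)
    (hIneq : ∀ (n : ℕ), 1 ≤ n → ∀ K : (Fin n → (ℕ → A)) → ℝ, SepLip θ K →
      ∫ x, Real.exp (K (traj n x)) ∂μ ≤
        Real.exp (∫ y, K (traj n y) ∂μ) * Real.exp (D * ∑ j : Fin n, lipCoord θ K j ^ 2)) :
    ∀ α ∈ Set.Ioo (0 : ℝ) 1, ∀ n : ℕ, 2 ≤ n → ∀ k : ℕ, 1 ≤ k →
      (k : ℝ) ≤ α / (2 * Real.log (Fintype.card A)) * Real.log n →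
      ∫ x, (empEnt n k x / (k : ℝ) - ∫ y, empEnt n k y / (k : ℝ) ∂μ) ^ 2 ∂μ ≤
        8 * D * Real.log n ^ 2 / (n : ℝ) ^ ((1 : ℝ) - α) := by
  intro α hα n hn k hk hkn
  have hn0 : 0 < n := by omega
  calc _ ≤ 80 / 9 * D * (log n + 1) ^ 2 / n :=
        integral_sq_empEnt_div_sub_le hθ.1.le hD hn0 hk (hIneq n hn0)
    _ ≤ _ := sq_log_add_one_div_le_sq_log_div_rpow hD.le hn0 hα.2.le
        (two_log_two_le_mul_log hA hk hkn)

theorem statement_7 {A : Type*} [Fintype A] [DecidableEq A] [MeasurableSpace A] [MeasurableSingletonClass A]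
    (hA : 2 ≤ Fintype.card A)
    (θ : ℝ) (hθ : θ ∈ Set.Ioo (0 : ℝ) 1)
    (φ : (ℕ → A) → ℝ) (hφ : LipFun θ φ)
    (μ : Measure (ℕ → A)) [IsProbabilityMeasure μ]
    (hσ : MeasurePreserving (shift (A := A)) μ μ)
    (hGibbs : IsGibbs φ μ)
    (D : ℝ) (hD : 0 < D)
    (hIneq : ∀ (n : ℕ), 1 ≤ n → ∀ K : (Fin n → (ℕ → A)) → ℝ, SepLip θ K →
      ∫ x, Real.exp (K (traj n x)) ∂μ ≤
        Real.exp (∫ y, K (traj n y) ∂μ) * Real.exp (D * ∑ j : Fin n, lipCoord θ K j ^ 2)) :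
    ∀ α ∈ Set.Ioo (0 : ℝ) 1, ∀ n : ℕ, 2 ≤ n → ∀ k : ℕ, 1 ≤ k →
      (k : ℝ) ≤ α / (2 * Real.log (Fintype.card A)) * Real.log n →
      ∫ x, (empEnt n k x / (k : ℝ) - ∫ y, empEnt n k y / (k : ℝ) ∂μ) ^ 2 ∂μ ≤
        8 * D * Real.log n ^ 2 / (n : ℝ) ^ ((1 : ℝ) - α) :=
  statement_7_general hA θ hθ μ D hD hIneq
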